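/- arXiv:1202.1152 — 2 statements merged into one kernel-verified Lean document; each statement's English description precedes it below -/
import Mathlib

section
/- (Goodman's characterizations.) Let t0, y0 ∈ ℝ, a > 0, I = [t0, t0+a], let f : I × ℝ → ℝ be continuous, and let α be a lower solution and β an upper solution of y' = f(t,y), y(t0) = y0 on I with α ≤ β on I. Let φ_* and φ^* denote the least and the greatest solutions of the problem among solutions lying in [α, β] (which exist). Then for every t ∈ I: φ_*(t) = min{ γ(t) : γ is an upper solution of the problem on I with α ≤ γ ≤ β }, and φ^*(t) = max{ γ(t) : γ is a lower solution of the problem on I with α ≤ γ ≤ β }. -/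
/-!
Every solution is both an upper and a lower solution, so it suffices to show that below an upper
solution `γ` with `α ≤ γ ≤ β` there is a solution in `[α, γ]` (and dually); that solution lies in
`[α, β]`, hence above `φ_*`. Such a solution is obtained by truncating `f` to the sector between
`α` and `γ`: the truncated field is bounded and continuous on the whole plane, so it has a solution
by Peano's theorem, and the differential inequalities of `α` and `γ` keep that solution inside the
sector, where it solves the original problem.

Peano's theorem is proved by monotone approximation: the Lipschitz envelopes
`inf_q (g q + (n + 1) |p - q|)` increase to `g`, their Picard–Lindelöf solutions increase with `n`
by a comparison principle, and the pointwise limit solves the integral equation by dominated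
convergence.
-/

open Set

/-- `γ` is a lower solution of `y' = f(t,y)`, `y t0 = y0` on `[t0, t0+a]`:
continuously differentiable, `γ t0 ≤ y0`, `γ' ≤ f(t, γ)`. -/
def IsLowerSol (t0 y0 a : ℝ) (f : ℝ → ℝ → ℝ) (γ : ℝ → ℝ) : Prop :=
  ∃ γ' : ℝ → ℝ,
    (∀ t ∈ Icc t0 (t0 + a), HasDerivWithinAt γ (γ' t) (Icc t0 (t0 + a)) t) ∧
    ContinuousOn γ' (Icc t0 (t0 + a)) ∧ γ t0 ≤ y0 ∧
    ∀ t ∈ Icc t0 (t0 + a), γ' t ≤ f t (γ t)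

/-- `γ` is an upper solution of `y' = f(t,y)`, `y t0 = y0` on `[t0, t0+a]`. -/
def IsUpperSol (t0 y0 a : ℝ) (f : ℝ → ℝ → ℝ) (γ : ℝ → ℝ) : Prop :=
  ∃ γ' : ℝ → ℝ,
    (∀ t ∈ Icc t0 (t0 + a), HasDerivWithinAt γ (γ' t) (Icc t0 (t0 + a)) t) ∧
    ContinuousOn γ' (Icc t0 (t0 + a)) ∧ y0 ≤ γ t0 ∧
    ∀ t ∈ Icc t0 (t0 + a), f t (γ t) ≤ γ' t

/-- `φ` is a solution of `y' = f(t,y)`, `y t0 = y0` on `[t0, t0+a]`. -/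
def IsSol (t0 y0 a : ℝ) (f : ℝ → ℝ → ℝ) (φ : ℝ → ℝ) : Prop :=
  φ t0 = y0 ∧
    ∀ t ∈ Icc t0 (t0 + a), HasDerivWithinAt φ (f t (φ t)) (Icc t0 (t0 + a)) t

open Filter Topology Function

theorem HasDerivWithinAt.Ici_of_mem_Ico {f : ℝ → ℝ} {f' a b x : ℝ}
    (h : HasDerivWithinAt f f' (Icc a b) x) (hx : x ∈ Ico a b) :
    HasDerivWithinAt f f' (Ici x) x :=
  h.mono_of_mem_nhdsWithin <| mem_of_superset (Icc_mem_nhdsGE hx.2) (Icc_subset_Icc_left hx.1)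

theorem image_le_of_deriv_le_of_gt {a b : ℝ} {p q p' q' : ℝ → ℝ}
    (hp : ∀ t ∈ Icc a b, HasDerivWithinAt p (p' t) (Icc a b) t)
    (hq : ∀ t ∈ Icc a b, HasDerivWithinAt q (q' t) (Icc a b) t)
    (h0 : p a ≤ q a) (hd : ∀ t ∈ Ico a b, q t < p t → p' t ≤ q' t) :
    ∀ t ∈ Icc a b, p t ≤ q t := by
  intro t ht
  -- `p` cannot touch the barrier `q + δ (t - a + 1)` from below; then let `δ → 0`
  have fence : ∀ δ > 0, p t ≤ q t + δ * (t - a + 1) := by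
    intro δ hδ
    refine image_le_of_deriv_right_lt_deriv_boundary' (B := fun s => q s + δ * (s - a + 1))
      (B' := fun s => q' s + δ) (HasDerivWithinAt.continuousOn hp)
      (fun s hs => (hp s (Ico_subset_Icc_self hs)).Ici_of_mem_Ico hs)
      (by simpa using h0.trans (le_add_of_nonneg_right hδ.le)) ?_ ?_ ?_ ht
    · exact (HasDerivWithinAt.continuousOn hq).add (by fun_prop)
    · intro s hs
      have hlin : HasDerivAt (fun s => δ * (s - a + 1)) δ s := by
        simpa using ((hasDerivAt_id s).sub_const a |>.add_const 1 |>.const_mul δ)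
      exact ((hq s (Ico_subset_Icc_self hs)).Ici_of_mem_Ico hs).add hlin.hasDerivWithinAt
    · intro s hs hcontact
      have : q s < p s := by rw [hcontact]; nlinarith [hs.1]
      linarith [hd s hs this]
  have hlim : Tendsto (fun δ : ℝ => q t + δ * (t - a + 1)) (𝓝[>] 0) (𝓝 (q t)) := by
    have : Continuous (fun δ : ℝ => q t + δ * (t - a + 1)) := by fun_prop
    simpa using (this.tendsto 0).mono_left nhdsWithin_le_nhds
  exact ge_of_tendsto hlim (eventually_nhdsWithin_of_forall fence)

theorem image_le_of_deriv_le_of_oneSidedLipschitz {a b K : ℝ} {G : ℝ → ℝ → ℝ}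
    {p q p' q' : ℝ → ℝ}
    (hG : ∀ t ∈ Ico a b, ∀ y z, z < y → G t y - G t z ≤ K * (y - z))
    (hp : ∀ t ∈ Icc a b, HasDerivWithinAt p (p' t) (Icc a b) t)
    (hq : ∀ t ∈ Icc a b, HasDerivWithinAt q (q' t) (Icc a b) t)
    (hp' : ∀ t ∈ Ico a b, p' t ≤ G t (p t)) (hq' : ∀ t ∈ Ico a b, G t (q t) ≤ q' t)
    (h0 : p a ≤ q a) :
    ∀ t ∈ Icc a b, p t ≤ q t := by
  -- where `p > q`, the weighted difference `e^{-K (t - a)} (p - q)` is nonincreasing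
  set e : ℝ → ℝ := fun t => Real.exp (-K * (t - a))
  have he : ∀ t, HasDerivAt e (-K * e t) t := fun t => by
    simpa [e, mul_comm] using (((hasDerivAt_id t).sub_const a).const_mul (-K)).exp
  have hw : ∀ t ∈ Icc a b, HasDerivWithinAt (fun s => e s * (p s - q s))
      (-K * e t * (p t - q t) + e t * (p' t - q' t)) (Icc a b) t :=
    fun t ht => ((he t).hasDerivWithinAt.mul ((hp t ht).sub (hq t ht)))
  have hw_nonpos := image_le_of_deriv_le_of_gt hw
    (fun t _ => hasDerivWithinAt_const t _ (0 : ℝ)) (by simp [e, h0]) ?_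
  · intro t ht
    have := hw_nonpos t ht
    have hpos : 0 < e t := Real.exp_pos _
    nlinarith
  · intro t ht hgt
    have hpos : 0 < e t := Real.exp_pos _
    have hqp : q t < p t := by
      by_contra! hcon; nlinarith
    have := hG t ht _ _ hqp
    have h1 : p' t - q' t ≤ K * (p t - q t) := by linarith [hp' t ht, hq' t ht]
    nlinarith

section LipEnvelope

variable {X : Type*} [PseudoMetricSpace X] {h : X → ℝ} {m K : ℝ}

/-- The Pasch–Hausdorff envelope: the largest `K`-Lipschitz minorant of `h`. -/
noncomputable def lipEnvelope (h : X → ℝ) (K : ℝ) (x : X) : ℝ :=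
  ⨅ y, h y + K * dist x y

theorem bddBelow_range_add_mul_dist (hm : ∀ y, m ≤ h y) (hK : 0 ≤ K) (x : X) :
    BddBelow (range fun y => h y + K * dist x y) :=
  ⟨m, forall_mem_range.2 fun y => by nlinarith [hm y, dist_nonneg (x := x) (y := y)]⟩

theorem lipEnvelope_le_add_mul_dist (hm : ∀ y, m ≤ h y) (hK : 0 ≤ K) (x y : X) :
    lipEnvelope h K x ≤ h y + K * dist x y :=
  ciInf_le (bddBelow_range_add_mul_dist hm hK x) y

theorem lipEnvelope_le (hm : ∀ y, m ≤ h y) (hK : 0 ≤ K) (x : X) : lipEnvelope h K x ≤ h x := by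
  simpa using lipEnvelope_le_add_mul_dist hm hK x x

theorem le_lipEnvelope (hm : ∀ y, m ≤ h y) (hK : 0 ≤ K) (x : X) : m ≤ lipEnvelope h K x :=
  have : Nonempty X := ⟨x⟩
  le_ciInf fun y => by nlinarith [hm y, dist_nonneg (x := x) (y := y)]

theorem lipEnvelope_mono (hm : ∀ y, m ≤ h y) {K' : ℝ} (hK : 0 ≤ K) (hKK' : K ≤ K') (x : X) :
    lipEnvelope h K x ≤ lipEnvelope h K' x :=
  have : Nonempty X := ⟨x⟩
  le_ciInf fun y => (lipEnvelope_le_add_mul_dist hm hK x y).trans <| by gcongr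

theorem lipEnvelope_le_lipEnvelope_add (hm : ∀ y, m ≤ h y) (hK : 0 ≤ K) (x x' : X) :
    lipEnvelope h K x ≤ lipEnvelope h K x' + K * dist x x' := by
  have : Nonempty X := ⟨x⟩
  rw [← sub_le_iff_le_add]
  refine le_ciInf fun y => sub_le_iff_le_add.2 ?_
  calc lipEnvelope h K x ≤ h y + K * dist x y := lipEnvelope_le_add_mul_dist hm hK x y
    _ ≤ h y + K * (dist x x' + dist x' y) := by gcongr; exact dist_triangle x x' y
    _ = h y + K * dist x' y + K * dist x x' := by ring

theorem lipschitzWith_lipEnvelope (hm : ∀ y, m ≤ h y) (K : NNReal) :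
    LipschitzWith K (lipEnvelope h K) :=
  LipschitzWith.of_le_add_mul K fun x x' => lipEnvelope_le_lipEnvelope_add hm K.2 x x'

theorem tendsto_lipEnvelope {ι : Type*} {l : Filter ι} {p : X} (hm : ∀ y, m ≤ h y)
    (hh : ContinuousAt h p) {K : ι → ℝ} (hK : Tendsto K l atTop) {x : ι → X}
    (hx : Tendsto x l (𝓝 p)) : Tendsto (fun i => lipEnvelope h (K i) (x i)) l (𝓝 (h p)) := by
  refine tendsto_order.2 ⟨fun c hc => ?_, fun c hc => ?_⟩
  · obtain ⟨c', hcc', hc'⟩ := exists_between hc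
    obtain ⟨δ, hδ, hball⟩ := Metric.eventually_nhds_iff.1 (hh.eventually_const_lt hc')
    filter_upwards [hK.eventually_ge_atTop 0, hK.eventually_ge_atTop ((c' - m) / (δ / 2)),
      Metric.tendsto_nhds.1 hx (δ / 2) (half_pos hδ)] with i hK0 hKi hxi
    have : Nonempty X := ⟨p⟩
    refine hcc'.trans_le (le_ciInf fun y => ?_)
    by_cases hy : dist y p < δ
    · nlinarith [hball hy, dist_nonneg (x := x i) (y := y)]
    · have hfar : δ / 2 ≤ dist (x i) y := by
        linarith [dist_triangle y (x i) p, dist_comm (x i) y]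
      have : c' - m ≤ K i * (δ / 2) := (div_le_iff₀ (half_pos hδ)).1 hKi
      nlinarith [hm y]
  · filter_upwards [hK.eventually_ge_atTop 0, (hh.tendsto.comp hx).eventually_lt_const hc]
      with i hK0 hxi
    exact (lipEnvelope_le hm hK0 (x i)).trans_lt hxi

end LipEnvelope

theorem image_le_of_hasDerivWithinAt_lipEnvelope {h : ℝ × ℝ → ℝ} {m K K' t0 t1 : ℝ}
    (hm : ∀ p, m ≤ h p) (hK : 0 ≤ K) (hKK' : K ≤ K') {p q : ℝ → ℝ}
    (hp : ∀ t ∈ Icc t0 t1, HasDerivWithinAt p (lipEnvelope h K (t, p t)) (Icc t0 t1) t)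
    (hq : ∀ t ∈ Icc t0 t1, HasDerivWithinAt q (lipEnvelope h K' (t, q t)) (Icc t0 t1) t)
    (h0 : p t0 ≤ q t0) : ∀ t ∈ Icc t0 t1, p t ≤ q t :=
  image_le_of_deriv_le_of_oneSidedLipschitz (G := fun t y => lipEnvelope h K' (t, y)) (K := K')
    (fun t _ y z hzy => by
      have := lipEnvelope_le_lipEnvelope_add hm (hK.trans hKK') (t, y) (t, z)
      rw [dist_prod_same_left, Real.dist_eq, abs_of_pos (sub_pos.2 hzy)] at this
      linarith)
    hp hq (fun _ _ => lipEnvelope_mono hm hK hKK' _) (fun _ _ => le_rfl) h0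

theorem exists_hasDerivWithinAt_of_lipschitzWith {G : ℝ → ℝ → ℝ} {K : NNReal} {M t0 t1 : ℝ}
    (y0 : ℝ) (h01 : t0 ≤ t1) (hlip : ∀ t, LipschitzWith K (G t))
    (hcont : ∀ y, Continuous (G · y)) (hM : ∀ t y, |G t y| ≤ M) :
    ∃ φ : ℝ → ℝ, φ t0 = y0 ∧ ∀ t ∈ Icc t0 t1, HasDerivWithinAt φ (G t (φ t)) (Icc t0 t1) t := by
  have hM0 : 0 ≤ M := (abs_nonneg _).trans (hM t0 y0)
  have hPL : IsPicardLindelof G (tmin := t0) (tmax := t1) ⟨t0, left_mem_Icc.2 h01⟩ y0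
      ⟨M * (t1 - t0), mul_nonneg hM0 (sub_nonneg.2 h01)⟩ 0 ⟨M, hM0⟩ K :=
    { lipschitzOnWith := fun t _ => (hlip t).lipschitzOnWith
      continuousOn := fun y _ => (hcont y).continuousOn
      norm_le := fun t _ y _ => hM t y
      mul_max_le := by simp [max_eq_left (sub_nonneg.2 h01)]; rfl }
  exact hPL.exists_eq_forall_mem_Icc_hasDerivWithinAt₀

theorem eq_picard_of_tendsto {G : ℕ → ℝ → ℝ → ℝ} {g : ℝ → ℝ → ℝ} {φ : ℕ → ℝ → ℝ}
    {Φ : ℝ → ℝ} {M t0 t1 y0 : ℝ} (hG : ∀ n, Continuous (uncurry (G n)))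
    (hM : ∀ n t y, |G n t y| ≤ M) (hφ0 : ∀ n, φ n t0 = y0)
    (hφ : ∀ n, ∀ t ∈ Icc t0 t1, HasDerivWithinAt (φ n) (G n t (φ n t)) (Icc t0 t1) t)
    (hφΦ : ∀ t ∈ Icc t0 t1, Tendsto (φ · t) atTop (𝓝 (Φ t)))
    (hGg : ∀ t ∈ Icc t0 t1, Tendsto (fun n => G n t (φ n t)) atTop (𝓝 (g t (Φ t)))) :
    ∀ t ∈ Icc t0 t1, Φ t = ODE.picard g t0 y0 Φ t := by
  intro t ht
  have hsub : uIcc t0 t ⊆ Icc t0 t1 := by rw [uIcc_of_le ht.1]; exact Icc_subset_Icc_right ht.2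
  have hφ_eq : ∀ n, ODE.picard (G n) t0 y0 (φ n) t = φ n t := fun n => by
    rw [← hφ0 n]
    exact ODE.picard_eq_of_hasDerivAt (hG n).continuousOn
      (fun s hs => (hφ n s (hsub hs)).mono hsub) (mapsTo_univ _ _)
  refine tendsto_nhds_unique (hφΦ t ht) ?_
  simp_rw [← hφ_eq, ODE.picard_apply]
  refine tendsto_const_nhds.add <| intervalIntegral.tendsto_integral_filter_of_dominated_convergence
    (fun _ => M) (Eventually.of_forall fun n => ?_) (Eventually.of_forall fun n => ?_)
    intervalIntegrable_const (Eventually.of_forall fun s hs => ?_)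
  · have : ContinuousOn (fun s => G n s (φ n s)) (uIcc t0 t) :=
      ODE.continuousOn_comp (hG n).continuousOn
        (HasDerivWithinAt.continuousOn fun s hs => (hφ n s (hsub hs)).mono hsub) (mapsTo_univ _ _)
    exact (this.aestronglyMeasurable measurableSet_uIcc).mono_set uIoc_subset_uIcc
  · exact Eventually.of_forall fun s _ => hM n s (φ n s)
  · exact hGg s (hsub (uIoc_subset_uIcc hs))

theorem exists_hasDerivWithinAt_of_continuous_of_bounded {g : ℝ → ℝ → ℝ} {M t0 t1 : ℝ}
    (y0 : ℝ) (h01 : t0 ≤ t1) (hg : Continuous (uncurry g)) (hM : ∀ t y, |g t y| ≤ M) :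
    ∃ Φ : ℝ → ℝ, Φ t0 = y0 ∧ ∀ t ∈ Icc t0 t1, HasDerivWithinAt Φ (g t (Φ t)) (Icc t0 t1) t := by
  have hM0 : 0 ≤ M := (abs_nonneg _).trans (hM t0 y0)
  have hlow : ∀ p, -M ≤ uncurry g p := fun p => neg_le_of_abs_le (hM p.1 p.2)
  set G : ℕ → ℝ → ℝ → ℝ := fun n t y => lipEnvelope (uncurry g) (n + 1) (t, y)
  have hGlip : ∀ n : ℕ, LipschitzWith ((n : NNReal) + 1) (uncurry (G n)) := fun n => by
    have := lipschitzWith_lipEnvelope hlow ((n : NNReal) + 1)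
    push_cast at this
    exact this
  have hGM : ∀ n t y, |G n t y| ≤ M := fun n t y => abs_le.2
    ⟨le_lipEnvelope hlow (by positivity) _,
      (lipEnvelope_le hlow (by positivity) _).trans (le_of_abs_le (hM t y))⟩
  choose φ hφ0 hφ using fun n => exists_hasDerivWithinAt_of_lipschitzWith y0 h01
    (fun t => (hGlip n).comp (LipschitzWith.prodMk_left t))
    (fun y => (hGlip n).continuous.comp (continuous_id.prodMk continuous_const)) (hGM n)
  have hmono : ∀ t ∈ Icc t0 t1, Monotone (φ · t) := fun t ht => monotone_nat_of_le_succ fun n =>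
    image_le_of_hasDerivWithinAt_lipEnvelope hlow (by positivity) (by push_cast; linarith)
      (hφ n) (hφ (n + 1)) (by rw [hφ0, hφ0]) t ht
  have hφlip : ∀ n, ∀ s ∈ Icc t0 t1, ∀ t ∈ Icc t0 t1, dist (φ n t) (φ n s) ≤ M * dist t s :=
    fun n s hs t ht => (convex_Icc t0 t1).norm_image_sub_le_of_norm_hasDerivWithin_le (hφ n)
      (fun r _ => hGM n r _) hs ht
  have hbdd : ∀ t ∈ Icc t0 t1, BddAbove (range (φ · t)) := fun t ht =>
    ⟨y0 + M * dist t t0, forall_mem_range.2 fun n => by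
      have := hφlip n t0 (left_mem_Icc.2 h01) t ht
      rw [hφ0, Real.dist_eq] at this
      linarith [le_abs_self (φ n t - y0)]⟩
  set Φ : ℝ → ℝ := fun t => ⨆ n, φ n t
  have hφΦ : ∀ t ∈ Icc t0 t1, Tendsto (φ · t) atTop (𝓝 (Φ t)) := fun t ht =>
    tendsto_atTop_ciSup (hmono t ht) (hbdd t ht)
  have hΦcont : ContinuousOn Φ (Icc t0 t1) :=
    (LipschitzOnWith.of_dist_le_mul (K := ⟨M, hM0⟩) fun t ht s hs =>
      le_of_tendsto' ((hφΦ t ht).dist (hφΦ s hs)) fun n => hφlip n s hs t ht).continuousOn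
  have hpicard := eq_picard_of_tendsto (g := g) (fun n => (hGlip n).continuous) hGM hφ0 hφ hφΦ
    fun t ht => tendsto_lipEnvelope hlow hg.continuousAt
      (tendsto_natCast_atTop_atTop.atTop_add tendsto_const_nhds)
      (tendsto_const_nhds.prodMk_nhds (hφΦ t ht))
  refine ⟨Φ, by rw [hpicard t0 (left_mem_Icc.2 h01), ODE.picard_apply₀], fun t ht => ?_⟩
  exact (ODE.hasDerivWithinAt_picard_Icc (left_mem_Icc.2 h01) hg.continuousOn hΦcont
    (fun _ _ => mem_univ _) y0 ht).congr hpicard (hpicard t ht)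

/-- Clamping `t` to `[t0, t1]` and then `y` to `[u t, v t]` gives a field on the whole plane that
agrees with `f` on the sector and takes its boundary values outside. -/
noncomputable def truncatedField (t0 t1 : ℝ) (u v : ℝ → ℝ) (f : ℝ → ℝ → ℝ) (t y : ℝ) : ℝ :=
  let s := max t0 (min t t1)
  f s (max (u s) (min y (v s)))

section TruncatedField

variable {t0 t1 : ℝ} {u v : ℝ → ℝ} {f : ℝ → ℝ → ℝ}

theorem truncatedField_of_mem {t : ℝ} (ht : t ∈ Icc t0 t1) (y : ℝ) :
    truncatedField t0 t1 u v f t y = f t (max (u t) (min y (v t))) := by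
  simp only [truncatedField, min_eq_left ht.2, max_eq_right ht.1]

theorem max_min_mem_Icc (h01 : t0 ≤ t1) (t : ℝ) : max t0 (min t t1) ∈ Icc t0 t1 :=
  ⟨le_max_left _ _, max_le h01 (min_le_right _ _)⟩

theorem continuous_truncatedField (h01 : t0 ≤ t1) (hu : ContinuousOn u (Icc t0 t1))
    (hv : ContinuousOn v (Icc t0 t1)) (hf : ContinuousOn (uncurry f) (Icc t0 t1 ×ˢ univ)) :
    Continuous (uncurry (truncatedField t0 t1 u v f)) := by
  have hs : Continuous fun p : ℝ × ℝ => max t0 (min p.1 t1) := by fun_prop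
  have hus := hu.comp_continuous hs fun p => max_min_mem_Icc h01 p.1
  have hvs := hv.comp_continuous hs fun p => max_min_mem_Icc h01 p.1
  rw [← continuousOn_univ]
  exact hf.comp (hs.prodMk (hus.max (continuous_snd.min hvs))).continuousOn
    fun p _ => ⟨max_min_mem_Icc h01 p.1, mem_univ _⟩

theorem exists_bound_truncatedField (h01 : t0 ≤ t1) (hu : ContinuousOn u (Icc t0 t1))
    (hv : ContinuousOn v (Icc t0 t1)) (hf : ContinuousOn (uncurry f) (Icc t0 t1 ×ˢ univ)) :
    ∃ M, ∀ t y, |truncatedField t0 t1 u v f t y| ≤ M := by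
  obtain ⟨Bu, hBu⟩ := isCompact_Icc.exists_bound_of_continuousOn hu
  obtain ⟨Bv, hBv⟩ := isCompact_Icc.exists_bound_of_continuousOn hv
  obtain ⟨M, hM⟩ := (isCompact_Icc.prod (isCompact_Icc (a := -max Bu Bv) (b := max Bu Bv)))
    |>.exists_bound_of_continuousOn (hf.mono (prod_mono_right (subset_univ _)))
  refine ⟨M, fun t y => hM (_, _) ⟨max_min_mem_Icc h01 t, ?_⟩⟩
  have hus := abs_le.1 ((hBu _ (max_min_mem_Icc h01 t)).trans (le_max_left Bu Bv))
  have hvs := abs_le.1 ((hBv _ (max_min_mem_Icc h01 t)).trans (le_max_right Bu Bv))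
  constructor
  · exact hus.1.trans (le_max_left _ _)
  · exact max_le hus.2 ((min_le_right _ _).trans hvs.2)

end TruncatedField

theorem exists_isSol_of_isLowerSol_of_isUpperSol {t0 y0 a : ℝ} (ha : 0 ≤ a)
    {f : ℝ → ℝ → ℝ} (hf : ContinuousOn (uncurry f) (Icc t0 (t0 + a) ×ˢ univ)) {u v : ℝ → ℝ}
    (hu : IsLowerSol t0 y0 a f u) (hv : IsUpperSol t0 y0 a f v)
    (huv : ∀ t ∈ Icc t0 (t0 + a), u t ≤ v t) :
    ∃ φ, IsSol t0 y0 a f φ ∧ ∀ t ∈ Icc t0 (t0 + a), u t ≤ φ t ∧ φ t ≤ v t := by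
  obtain ⟨u', hu', -, hu0, hu'f⟩ := hu
  obtain ⟨v', hv', -, hv0, hv'f⟩ := hv
  have h01 : t0 ≤ t0 + a := le_add_of_nonneg_right ha
  have hucont := HasDerivWithinAt.continuousOn hu'
  have hvcont := HasDerivWithinAt.continuousOn hv'
  obtain ⟨M, hM⟩ := exists_bound_truncatedField h01 hucont hvcont hf
  obtain ⟨Φ, hΦ0, hΦ⟩ := exists_hasDerivWithinAt_of_continuous_of_bounded y0 h01
    (continuous_truncatedField h01 hucont hvcont hf) hM
  have huΦ : ∀ t ∈ Icc t0 (t0 + a), u t ≤ Φ t :=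
    image_le_of_deriv_le_of_gt hu' hΦ (hΦ0 ▸ hu0) fun t ht hlt => by
      rw [truncatedField_of_mem (Ico_subset_Icc_self ht), max_eq_left (min_le_of_left_le hlt.le)]
      exact hu'f t (Ico_subset_Icc_self ht)
  have hΦv : ∀ t ∈ Icc t0 (t0 + a), Φ t ≤ v t :=
    image_le_of_deriv_le_of_gt hΦ hv' (hΦ0 ▸ hv0) fun t ht hlt => by
      rw [truncatedField_of_mem (Ico_subset_Icc_self ht), min_eq_right hlt.le,
        max_eq_right (huv t (Ico_subset_Icc_self ht))]
      exact hv'f t (Ico_subset_Icc_self ht)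
  refine ⟨Φ, ⟨hΦ0, fun t ht => ?_⟩, fun t ht => ⟨huΦ t ht, hΦv t ht⟩⟩
  have := hΦ t ht
  rwa [truncatedField_of_mem ht, min_eq_left (hΦv t ht), max_eq_right (huΦ t ht)] at this

theorem IsSol.isUpperSol {t0 y0 a : ℝ} {f : ℝ → ℝ → ℝ} {φ : ℝ → ℝ}
    (hf : ContinuousOn (uncurry f) (Icc t0 (t0 + a) ×ˢ univ)) (hφ : IsSol t0 y0 a f φ) :
    IsUpperSol t0 y0 a f φ :=
  ⟨fun t => f t (φ t), hφ.2, ODE.continuousOn_comp hf (HasDerivWithinAt.continuousOn hφ.2)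
    (mapsTo_univ _ _), hφ.1.ge, fun _ _ => le_rfl⟩

theorem IsSol.isLowerSol {t0 y0 a : ℝ} {f : ℝ → ℝ → ℝ} {φ : ℝ → ℝ}
    (hf : ContinuousOn (uncurry f) (Icc t0 (t0 + a) ×ˢ univ)) (hφ : IsSol t0 y0 a f φ) :
    IsLowerSol t0 y0 a f φ :=
  ⟨fun t => f t (φ t), hφ.2, ODE.continuousOn_comp hf (HasDerivWithinAt.continuousOn hφ.2)
    (mapsTo_univ _ _), hφ.1.le, fun _ _ => le_rfl⟩

theorem goodman_characterizations_general (t0 y0 a : ℝ) (ha : 0 < a)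
    (f : ℝ → ℝ → ℝ)
    (hf : ContinuousOn (fun p : ℝ × ℝ => f p.1 p.2)
      (Icc t0 (t0 + a) ×ˢ (univ : Set ℝ)))
    (α β : ℝ → ℝ)
    (hα : IsLowerSol t0 y0 a f α) (hβ : IsUpperSol t0 y0 a f β)
    (φlow φhigh : ℝ → ℝ)
    (hlowSol : IsSol t0 y0 a f φlow)
    (hlowMem : ∀ t ∈ Icc t0 (t0 + a), α t ≤ φlow t ∧ φlow t ≤ β t)
    (hlowLeast : ∀ φ : ℝ → ℝ, IsSol t0 y0 a f φ →
      (∀ t ∈ Icc t0 (t0 + a), α t ≤ φ t ∧ φ t ≤ β t) →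
      ∀ t ∈ Icc t0 (t0 + a), φlow t ≤ φ t)
    (hhighSol : IsSol t0 y0 a f φhigh)
    (hhighMem : ∀ t ∈ Icc t0 (t0 + a), α t ≤ φhigh t ∧ φhigh t ≤ β t)
    (hhighGreatest : ∀ φ : ℝ → ℝ, IsSol t0 y0 a f φ →
      (∀ t ∈ Icc t0 (t0 + a), α t ≤ φ t ∧ φ t ≤ β t) →
      ∀ t ∈ Icc t0 (t0 + a), φ t ≤ φhigh t) :
    ∀ t ∈ Icc t0 (t0 + a),
      IsLeast {x : ℝ | ∃ γ : ℝ → ℝ, IsUpperSol t0 y0 a f γ ∧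
        (∀ s ∈ Icc t0 (t0 + a), α s ≤ γ s ∧ γ s ≤ β s) ∧ x = γ t} (φlow t) ∧
      IsGreatest {x : ℝ | ∃ γ : ℝ → ℝ, IsLowerSol t0 y0 a f γ ∧
        (∀ s ∈ Icc t0 (t0 + a), α s ≤ γ s ∧ γ s ≤ β s) ∧ x = γ t} (φhigh t) := by
  intro t ht
  refine ⟨⟨⟨φlow, hlowSol.isUpperSol hf, hlowMem, rfl⟩, ?_⟩,
    ⟨⟨φhigh, hhighSol.isLowerSol hf, hhighMem, rfl⟩, ?_⟩⟩
  · rintro _ ⟨γ, hγ, hγmem, rfl⟩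
    obtain ⟨φ, hφ, hφmem⟩ := exists_isSol_of_isLowerSol_of_isUpperSol ha.le hf hα hγ
      fun s hs => (hγmem s hs).1
    have hφαβ : ∀ s ∈ Icc t0 (t0 + a), α s ≤ φ s ∧ φ s ≤ β s :=
      fun s hs => ⟨(hφmem s hs).1, (hφmem s hs).2.trans (hγmem s hs).2⟩
    exact (hlowLeast φ hφ hφαβ t ht).trans (hφmem t ht).2
  · rintro _ ⟨γ, hγ, hγmem, rfl⟩
    obtain ⟨φ, hφ, hφmem⟩ := exists_isSol_of_isLowerSol_of_isUpperSol ha.le hf hγ hβ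
      fun s hs => (hγmem s hs).2
    have hφαβ : ∀ s ∈ Icc t0 (t0 + a), α s ≤ φ s ∧ φ s ≤ β s :=
      fun s hs => ⟨(hγmem s hs).1.trans (hφmem s hs).1, (hφmem s hs).2⟩
    exact (hφmem t ht).1.trans (hhighGreatest φ hφ hφαβ t ht)

/-- Goodman's characterizations: if `φlow`/`φhigh` are the least/greatest solutions
in the sector `[α, β]` determined by a lower solution `α` and an upper solution `β`
with `α ≤ β`, then `φlow t` is the minimum value at `t` of all upper solutions lying
in `[α, β]`, and `φhigh t` is the maximum value at `t` of all lower solutions lying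
in `[α, β]`. -/
theorem goodman_characterizations (t0 y0 a : ℝ) (ha : 0 < a)
    (f : ℝ → ℝ → ℝ)
    (hf : ContinuousOn (fun p : ℝ × ℝ => f p.1 p.2)
      (Icc t0 (t0 + a) ×ˢ (univ : Set ℝ)))
    (α β : ℝ → ℝ)
    (hα : IsLowerSol t0 y0 a f α) (hβ : IsUpperSol t0 y0 a f β)
    (hαβ : ∀ t ∈ Icc t0 (t0 + a), α t ≤ β t)
    (φlow φhigh : ℝ → ℝ)
    (hlowSol : IsSol t0 y0 a f φlow)
    (hlowMem : ∀ t ∈ Icc t0 (t0 + a), α t ≤ φlow t ∧ φlow t ≤ β t)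
    (hlowLeast : ∀ φ : ℝ → ℝ, IsSol t0 y0 a f φ →
      (∀ t ∈ Icc t0 (t0 + a), α t ≤ φ t ∧ φ t ≤ β t) →
      ∀ t ∈ Icc t0 (t0 + a), φlow t ≤ φ t)
    (hhighSol : IsSol t0 y0 a f φhigh)
    (hhighMem : ∀ t ∈ Icc t0 (t0 + a), α t ≤ φhigh t ∧ φhigh t ≤ β t)
    (hhighGreatest : ∀ φ : ℝ → ℝ, IsSol t0 y0 a f φ →
      (∀ t ∈ Icc t0 (t0 + a), α t ≤ φ t ∧ φ t ≤ β t) →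
      ∀ t ∈ Icc t0 (t0 + a), φ t ≤ φhigh t) :
    ∀ t ∈ Icc t0 (t0 + a),
      IsLeast {x : ℝ | ∃ γ : ℝ → ℝ, IsUpperSol t0 y0 a f γ ∧
        (∀ s ∈ Icc t0 (t0 + a), α s ≤ γ s ∧ γ s ≤ β s) ∧ x = γ t} (φlow t) ∧
      IsGreatest {x : ℝ | ∃ γ : ℝ → ℝ, IsLowerSol t0 y0 a f γ ∧
        (∀ s ∈ Icc t0 (t0 + a), α s ≤ γ s ∧ γ s ≤ β s) ∧ x = γ t} (φhigh t) :=
  goodman_characterizations_general t0 y0 a ha f hf α β hα hβ φlow φhigh hlowSol hlowMem hlowLeast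
    hhighSol hhighMem hhighGreatest
end

section
/- (Fourth version of Peano's Theorem, parts 1 and 2.) Let t0, y0 ∈ ℝ, a > 0, I = [t0, t0+a], let f : I × ℝ → ℝ be continuous, and suppose the problem y' = f(t,y), y(t0) = y0 has a strict lower solution α and a strict upper solution β on I. Then: (1) there exists a differentiable φ : I → ℝ with φ(t0) = y0 and φ' = f(t, φ) on I; (2) if φ is a solution of the problem on some subinterval [t0, t0+ε] with 0 < ε < a, then φ extends to a solution defined on all of I, and every solution φ defined on I satisfies α(t) < φ(t) < β(t) for all t ∈ (t0, t0+a]. -/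
/-!
Truncating `f` outside a rectangle containing the graphs of `α` and `β` gives a bounded,
uniformly continuous right-hand side `G`. Its sup-convolutions `G_n` (plus `1/(n+1)`) are
Lipschitz and decrease strictly to `G` uniformly, so Picard–Lindelöf solves `y' = G_n(t, y)`,
and the comparison principle for strict inequalities shows that these solutions decrease in `n`
and stay above `α`. Their pointwise limit satisfies the integral equation of `y' = G(t, y)`,
by dominated convergence. The same comparison principle traps every solution strictly between
`α` and `β`, where `G = f`; in particular a solution on `[t0, t0+ε]` ends strictly between the
fences, and restarting from there extends it.
-/

open Set Filter Topology Function NNReal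

section Fences

theorem image_le_of_deriv_lt_deriv_boundary_Icc {a b : ℝ} {u v u' v' : ℝ → ℝ}
    (hu : ∀ t ∈ Icc a b, HasDerivWithinAt u (u' t) (Icc a b) t)
    (hv : ∀ t ∈ Icc a b, HasDerivWithinAt v (v' t) (Icc a b) t)
    (ha : u a ≤ v a) (hlt : ∀ t ∈ Icc a b, u t = v t → u' t < v' t) :
    ∀ t ∈ Icc a b, u t ≤ v t :=
  have toIci {w w' : ℝ → ℝ} (hw : ∀ t ∈ Icc a b, HasDerivWithinAt w (w' t) (Icc a b) t)
      (t : ℝ) (ht : t ∈ Ico a b) : HasDerivWithinAt w (w' t) (Ici t) t :=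
    (hw t (Ico_subset_Icc_self ht)).mono_of_mem_nhdsWithin (Icc_mem_nhdsGE_of_mem ht)
  image_le_of_deriv_right_lt_deriv_boundary' (HasDerivWithinAt.continuousOn hu) (toIci hu) ha
    (HasDerivWithinAt.continuousOn hv) (toIci hv) fun t ht => hlt t (Ico_subset_Icc_self ht)

/-- At a touching point `t > a`, `v - u` attains its minimum `0` on `[a, t]` at `t`, so its
left derivative `v' t - u' t` cannot be positive. -/
theorem image_lt_of_deriv_lt_deriv_boundary_Icc {a b : ℝ} {u v u' v' : ℝ → ℝ}
    (hu : ∀ t ∈ Icc a b, HasDerivWithinAt u (u' t) (Icc a b) t)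
    (hv : ∀ t ∈ Icc a b, HasDerivWithinAt v (v' t) (Icc a b) t)
    (ha : u a ≤ v a) (hlt : ∀ t ∈ Icc a b, u t = v t → u' t < v' t) :
    ∀ t ∈ Ioc a b, u t < v t := by
  intro t ht
  have hle := image_le_of_deriv_lt_deriv_boundary_Icc hu hv ha hlt
  refine (hle t (Ioc_subset_Icc_self ht)).lt_of_ne fun heq => ?_
  have hsub : Icc a t ⊆ Icc a b := Icc_subset_Icc_right ht.2
  have htI : t ∈ Icc a b := Ioc_subset_Icc_self ht
  have hmin : IsLocalMinOn (v - u) (Icc a t) t := IsMinOn.localize fun s hs => by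
    simpa [heq] using hle s (hsub hs)
  have hderiv : HasDerivWithinAt (v - u) (v' t - u' t) (Icc a t) t :=
    ((hv t htI).sub (hu t htI)).mono hsub
  have hcone : a - t ∈ posTangentConeAt (Icc a t) t :=
    sub_mem_posTangentConeAt_of_segment_subset
      ((segment_eq_Icc' t a).trans_subset (by simp [ht.1.le]))
  have hnonneg : 0 ≤ (a - t) * (v' t - u' t) := by
    simpa using hmin.hasFDerivWithinAt_nonneg hderiv hcone
  nlinarith [hlt t htI heq, ht.1]

variable {a b : ℝ} {g : ℝ → ℝ → ℝ} {φ α α' β β' : ℝ → ℝ}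

theorem IsIntegralCurveOn.lowerFence_le (hφ : IsIntegralCurveOn φ g (Icc a b))
    (hα : ∀ t ∈ Icc a b, HasDerivWithinAt α (α' t) (Icc a b) t) (ha : α a ≤ φ a)
    (hαg : ∀ t ∈ Icc a b, α' t < g t (α t)) : ∀ t ∈ Icc a b, α t ≤ φ t :=
  image_le_of_deriv_lt_deriv_boundary_Icc hα hφ ha fun t ht h => h ▸ hαg t ht

theorem IsIntegralCurveOn.lowerFence_lt (hφ : IsIntegralCurveOn φ g (Icc a b))
    (hα : ∀ t ∈ Icc a b, HasDerivWithinAt α (α' t) (Icc a b) t) (ha : α a ≤ φ a)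
    (hαg : ∀ t ∈ Icc a b, α' t < g t (α t)) : ∀ t ∈ Ioc a b, α t < φ t :=
  image_lt_of_deriv_lt_deriv_boundary_Icc hα hφ ha fun t ht h => h ▸ hαg t ht

theorem IsIntegralCurveOn.le_upperFence (hφ : IsIntegralCurveOn φ g (Icc a b))
    (hβ : ∀ t ∈ Icc a b, HasDerivWithinAt β (β' t) (Icc a b) t) (ha : φ a ≤ β a)
    (hβg : ∀ t ∈ Icc a b, g t (β t) < β' t) : ∀ t ∈ Icc a b, φ t ≤ β t :=
  image_le_of_deriv_lt_deriv_boundary_Icc hφ hβ ha fun t ht h => h ▸ hβg t ht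

theorem IsIntegralCurveOn.lt_upperFence (hφ : IsIntegralCurveOn φ g (Icc a b))
    (hβ : ∀ t ∈ Icc a b, HasDerivWithinAt β (β' t) (Icc a b) t) (ha : φ a ≤ β a)
    (hβg : ∀ t ∈ Icc a b, g t (β t) < β' t) : ∀ t ∈ Ioc a b, φ t < β t :=
  image_lt_of_deriv_lt_deriv_boundary_Icc hφ hβ ha fun t ht h => h ▸ hβg t ht

end Fences

section Gluing

variable {E : Type*} [NormedAddCommGroup E] [NormedSpace ℝ E] {γ γ' : ℝ → E} {v : ℝ → E → E}
  {s s' : Set ℝ}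

theorem IsIntegralCurveOn.congr (h : IsIntegralCurveOn γ v s) (hs : EqOn γ' γ s) :
    IsIntegralCurveOn γ' v s := fun t ht => by
  rw [hs ht]; exact (h t ht).congr_of_mem hs ht

/-- At a point outside the closed set `s`, any derivative within `s` is vacuously correct. -/
theorem IsIntegralCurveOn.union_of_isClosed (h : IsIntegralCurveOn γ v s)
    (h' : IsIntegralCurveOn γ v s') (hs : IsClosed s) (hs' : IsClosed s') :
    IsIntegralCurveOn γ v (s ∪ s') := by
  have within {u : Set ℝ} (hu : IsIntegralCurveOn γ v u) (hcl : IsClosed u) (t : ℝ) :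
      HasDerivWithinAt γ (v t (γ t)) u t := by
    by_cases ht : t ∈ u
    · exact hu t ht
    · exact HasFDerivWithinAt.of_notMem_closure (by rwa [hcl.closure_eq])
  exact fun t _ => (within h hs t).union (within h' hs' t)

theorem IsIntegralCurveOn.piecewise_Icc {a b c : ℝ} {χ : ℝ → E}
    (hγ : IsIntegralCurveOn γ v (Icc a b)) (hχ : IsIntegralCurveOn χ v (Icc b c))
    (hb : χ b = γ b) (hab : a ≤ b) (hbc : b ≤ c) :
    IsIntegralCurveOn (fun t => if t ≤ b then γ t else χ t) v (Icc a c) := by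
  rw [← Icc_union_Icc_eq_Icc hab hbc]
  refine (hγ.congr fun t ht => if_pos ht.2).union_of_isClosed
    (hχ.congr fun t ht => ?_) isClosed_Icc isClosed_Icc
  rcases ht.1.eq_or_lt with rfl | h
  · simp [hb]
  · exact if_neg h.not_ge

end Gluing

section SupConvolution

variable {X : Type*} [PseudoMetricSpace X] {g : X → ℝ} {C : ℝ}

noncomputable def supConvolution (g : X → ℝ) (L : ℝ) (x : X) : ℝ :=
  ⨆ y, (g y - L * dist x y)

theorem bddAbove_range_sub_mul_dist (hg : ∀ y, g y ≤ C) {L : ℝ} (hL : 0 ≤ L) (x : X) :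
    BddAbove (range fun y => g y - L * dist x y) :=
  ⟨C, forall_mem_range.2 fun y => by nlinarith [hg y, dist_nonneg (x := x) (y := y)]⟩

theorem le_supConvolution (hg : ∀ y, g y ≤ C) {L : ℝ} (hL : 0 ≤ L) (x : X) :
    g x ≤ supConvolution g L x := by
  simpa [supConvolution] using le_ciSup (bddAbove_range_sub_mul_dist hg hL x) x

theorem supConvolution_le_of_forall_le {L : ℝ} {x : X} {c : ℝ}
    (h : ∀ y, g y - L * dist x y ≤ c) : supConvolution g L x ≤ c :=
  haveI : Nonempty X := ⟨x⟩
  ciSup_le h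

theorem supConvolution_le (hg : ∀ y, g y ≤ C) {L : ℝ} (hL : 0 ≤ L) (x : X) :
    supConvolution g L x ≤ C :=
  supConvolution_le_of_forall_le fun y => by nlinarith [hg y, dist_nonneg (x := x) (y := y)]

theorem supConvolution_anti (hg : ∀ y, g y ≤ C) {L L' : ℝ} (hL : 0 ≤ L) (hLL' : L ≤ L')
    (x : X) : supConvolution g L' x ≤ supConvolution g L x :=
  supConvolution_le_of_forall_le fun y =>
    (by nlinarith [dist_nonneg (x := x) (y := y)] : g y - L' * dist x y ≤ g y - L * dist x y).trans
      (le_ciSup (bddAbove_range_sub_mul_dist hg hL x) y)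

theorem lipschitzWith_supConvolution (hg : ∀ y, g y ≤ C) (L : ℝ≥0) :
    LipschitzWith L (supConvolution g L) := by
  refine LipschitzWith.of_le_add_mul L fun x x' => supConvolution_le_of_forall_le fun y => ?_
  have hy : g y - L * dist x' y ≤ supConvolution g L x' :=
    le_ciSup (bddAbove_range_sub_mul_dist hg L.2 x') y
  nlinarith [dist_triangle x' x y, dist_comm x x', L.2]

theorem supConvolution_le_add (hb : ∀ y, |g y| ≤ C) {x : X} {δ ε L : ℝ}
    (hε : ∀ y, dist x y < δ → g y ≤ g x + ε) (hL : 2 * C ≤ L * δ) (hL0 : 0 ≤ L) (hε0 : 0 ≤ ε) :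
    supConvolution g L x ≤ g x + ε := by
  refine supConvolution_le_of_forall_le fun y => ?_
  rcases lt_or_ge (dist x y) δ with h | h
  · nlinarith [hε y h, dist_nonneg (x := x) (y := y)]
  · nlinarith [abs_le.1 (hb x), abs_le.1 (hb y)]

theorem tendstoUniformly_supConvolution (hg : UniformContinuous g) (hb : ∀ y, |g y| ≤ C) :
    TendstoUniformly (fun L : ℝ => supConvolution g L) g atTop := by
  rw [Metric.tendstoUniformly_iff]
  intro ε hε
  obtain ⟨δ, hδ, hgδ⟩ := Metric.uniformContinuous_iff.1 hg (ε / 2) (half_pos hε)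
  filter_upwards [eventually_ge_atTop (2 * C / δ), eventually_ge_atTop 0] with L hL hL0 x
  have hup := supConvolution_le_add hb (fun y hy => ?_) ((div_le_iff₀ hδ).1 hL) hL0
    (half_pos hε).le (x := x)
  · rw [Real.dist_eq, abs_sub_lt_iff]
    constructor <;> linarith [le_supConvolution (fun y => (abs_le.1 (hb y)).2) hL0 x]
  · have := hgδ hy
    rw [Real.dist_eq, abs_sub_lt_iff] at this
    linarith

/-- The shift by `1 / (n + 1)` turns the monotone approximation from above into a strictly
monotone one. -/
theorem exists_lipschitzWith_strictAnti_tendstoUniformly (hg : UniformContinuous g)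
    (hb : ∀ y, |g y| ≤ C) :
    ∃ F : ℕ → X → ℝ, (∀ n, ∃ K, LipschitzWith K (F n)) ∧ (∀ n x, g x < F n x) ∧
      (∀ n x, F (n + 1) x < F n x) ∧ (∀ n x, |F n x| ≤ C + 1) ∧
      TendstoUniformly F g atTop := by
  have hg' : ∀ y, g y ≤ C := fun y => (abs_le.1 (hb y)).2
  have hL (n : ℕ) : (0 : ℝ) ≤ n + 1 := by positivity
  have hshift (n : ℕ) : 0 < 1 / ((n : ℝ) + 1) := by positivity
  refine ⟨fun n x => supConvolution g (n + 1) x + 1 / ((n : ℝ) + 1), fun n => ?_,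
    fun n x => ?_, fun n x => ?_, fun n x => ?_, ?_⟩
  · exact ⟨_, (lipschitzWith_supConvolution hg' (n + 1)).add (LipschitzWith.const _)⟩
  · linarith [le_supConvolution hg' (hL n) x, hshift n]
  · have hdec : 1 / ((n + 1 : ℕ) + 1 : ℝ) < 1 / ((n : ℝ) + 1) :=
      one_div_lt_one_div_of_lt (by positivity) (by push_cast; linarith)
    have hle : (n : ℝ) + 1 ≤ (n + 1 : ℕ) + 1 := by push_cast; linarith
    have := supConvolution_anti hg' (hL n) hle x
    linarith
  · have hshift_le : 1 / ((n : ℝ) + 1) ≤ 1 := by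
      rw [div_le_one (by positivity)]; linarith [(n.cast_nonneg : (0 : ℝ) ≤ n)]
    rw [abs_le]
    constructor <;> linarith [le_supConvolution hg' (hL n) x, supConvolution_le hg' (hL n) x,
      abs_le.1 (hb x), hshift n]
  · rw [Metric.tendstoUniformly_iff]
    intro ε hε
    have hconv := Metric.tendstoUniformly_iff.1 (tendstoUniformly_supConvolution hg hb) _
      (half_pos hε)
    have hshift0 := tendsto_one_div_add_atTop_nhds_zero_nat (𝕜 := ℝ)
    have hindex : Tendsto (fun n : ℕ => (n : ℝ) + 1) atTop atTop :=
      tendsto_natCast_atTop_atTop.atTop_add tendsto_const_nhds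
    filter_upwards [hindex.eventually hconv,
      hshift0.eventually (gt_mem_nhds (half_pos hε))] with n hn hn' x
    have := hn x
    rw [Real.dist_eq, abs_lt] at this ⊢
    constructor <;> linarith [hshift n]

end SupConvolution

theorem exists_uniformContinuous_bounded_eqOn_Icc_prod {t0 T m M : ℝ} (hT : t0 ≤ T)
    (hm : m ≤ M) {f : ℝ → ℝ → ℝ} (hf : ContinuousOn (uncurry f) (Icc t0 T ×ˢ Icc m M)) :
    ∃ G : ℝ × ℝ → ℝ, UniformContinuous G ∧ (∃ C, ∀ p, |G p| ≤ C) ∧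
      EqOn G (uncurry f) (Icc t0 T ×ˢ Icc m M) := by
  set g : Icc t0 T × Icc m M → ℝ := fun q => f q.1 q.2
  have hg : Continuous g := hf.comp_continuous
    ((continuous_subtype_val.comp continuous_fst).prodMk
      (continuous_subtype_val.comp continuous_snd)) fun q => ⟨q.1.2, q.2.2⟩
  obtain ⟨C, hC⟩ := (isCompact_range hg).isBounded.exists_norm_le
  refine ⟨g ∘ Prod.map (projIcc t0 T hT) (projIcc m M hm),
    (CompactSpace.uniformContinuous_of_continuous hg).comp
      ((LipschitzWith.projIcc hT).uniformContinuous.prodMap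
        (LipschitzWith.projIcc hm).uniformContinuous),
    ⟨C, fun p => hC _ (mem_range_self _)⟩, fun p hp => ?_⟩
  simp [g, uncurry_def, projIcc_of_mem hT hp.1, projIcc_of_mem hm hp.2]

theorem exists_isIntegralCurveOn_Icc_of_lipschitzWith {F : ℝ → ℝ → ℝ} {K : ℝ≥0} {L : ℝ}
    (hF : LipschitzWith K (uncurry F)) (hb : ∀ t y, |F t y| ≤ L) {t0 T : ℝ} (hT : t0 ≤ T)
    (y0 : ℝ) : ∃ φ : ℝ → ℝ, φ t0 = y0 ∧ IsIntegralCurveOn φ F (Icc t0 T) := by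
  have hpl : IsPicardLindelof F (⟨t0, left_mem_Icc.2 hT⟩ : Icc t0 T) y0
      (L.toNNReal * (T - t0).toNNReal) 0 L.toNNReal (K * 1) :=
    { lipschitzOnWith := fun t _ => (hF.comp (LipschitzWith.prodMk_left t)).lipschitzOnWith
      continuousOn := fun y _ =>
        (hF.continuous.comp (continuous_id.prodMk continuous_const)).continuousOn
      norm_le := fun t _ y _ => (hb t y).trans (Real.le_coe_toNNReal L)
      mul_max_le := by simp [hT] }
  exact hpl.exists_eq_forall_mem_Icc_hasDerivWithinAt₀

theorem LipschitzOnWith.of_tendsto {X : Type*} [PseudoMetricSpace X] {K : ℝ≥0} {s : Set X}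
    {φ : ℕ → X → ℝ} {ψ : X → ℝ} (hφ : ∀ n, LipschitzOnWith K (φ n) s)
    (hψ : ∀ x ∈ s, Tendsto (fun n => φ n x) atTop (𝓝 (ψ x))) : LipschitzOnWith K ψ s :=
  LipschitzOnWith.of_dist_le_mul fun x hx y hy =>
    le_of_tendsto ((hψ x hx).dist (hψ y hy))
      (Eventually.of_forall fun n => (hφ n).dist_le_mul x hx y hy)

/-- The pointwise limit solves the integral equation `ψ t = ψ t0 + ∫ G(s, ψ s)`: the integrands
`F n (s, φ n s)` converge to `G (s, ψ s)` by uniform convergence of `F n`, and are dominated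
by `C`. -/
theorem IsIntegralCurveOn.of_tendstoUniformly {t0 T C : ℝ} {G : ℝ → ℝ → ℝ}
    {F : ℕ → ℝ → ℝ → ℝ} {φ : ℕ → ℝ → ℝ} {ψ : ℝ → ℝ}
    (hG : Continuous (uncurry G)) (hF : ∀ n, Continuous (uncurry (F n)))
    (hFb : ∀ n t y, |F n t y| ≤ C)
    (hFG : TendstoUniformly (fun n => uncurry (F n)) (uncurry G) atTop)
    (hφ : ∀ n, IsIntegralCurveOn (φ n) (F n) (Icc t0 T))
    (hψ : ∀ t ∈ Icc t0 T, Tendsto (fun n => φ n t) atTop (𝓝 (ψ t))) :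
    IsIntegralCurveOn ψ G (Icc t0 T) := by
  have hψc : ContinuousOn ψ (Icc t0 T) := by
    refine (LipschitzOnWith.of_tendsto (K := C.toNNReal) (fun n => ?_) hψ).continuousOn
    refine (convex_Icc t0 T).lipschitzOnWith_of_nnnorm_hasDerivWithin_le (hφ n) fun t _ => ?_
    rw [← NNReal.coe_le_coe, coe_nnnorm, Real.norm_eq_abs]
    exact (hFb n t _).trans (Real.le_coe_toNNReal C)
  have hpicard : ∀ t ∈ Icc t0 T, ψ t = ODE.picard G t0 (ψ t0) ψ t := by
    intro t ht
    have hsub : uIcc t0 t ⊆ Icc t0 T := by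
      rw [uIcc_of_le ht.1]; exact Icc_subset_Icc_right ht.2
    have hφeq : ∀ n, ODE.picard (F n) t0 (φ n t0) (φ n) t = φ n t := fun n =>
      ODE.picard_eq_of_hasDerivAt (u := univ) (hF n).continuousOn
        (fun s hs => (hφ n s (hsub hs)).mono hsub) (mapsTo_univ _ _)
    refine tendsto_nhds_unique (hψ t ht) ?_
    simp only [← hφeq, ODE.picard_apply]
    refine (hψ t0 (left_mem_Icc.2 (ht.1.trans ht.2))).add ?_
    refine intervalIntegral.tendsto_integral_filter_of_dominated_convergence (fun _ => C)
      (Eventually.of_forall fun n => ?_) (Eventually.of_forall fun n => ?_)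
      intervalIntegrable_const (MeasureTheory.ae_of_all _ fun s hs => ?_)
    · refine ContinuousOn.aestronglyMeasurable ?_ measurableSet_uIoc
      exact (ODE.continuousOn_comp (hF n).continuousOn (hφ n).continuousOn
        (mapsTo_univ _ _)).mono (uIoc_subset_uIcc.trans hsub)
    · exact MeasureTheory.ae_of_all _ fun s _ => hFb n s _
    · rw [uIoc_of_le ht.1] at hs
      have hsI : s ∈ Icc t0 T := ⟨hs.1.le, hs.2.trans ht.2⟩
      exact hFG.tendsto_comp (hG.continuousAt (x := (s, ψ s)))
        (tendsto_const_nhds.prodMk_nhds (hψ s hsI))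
  intro t ht
  exact (ODE.hasDerivWithinAt_picard_Icc (left_mem_Icc.2 (ht.1.trans ht.2)) (u := univ)
    hG.continuousOn hψc (fun _ _ => mem_univ _) (ψ t0) ht).congr_of_mem hpicard ht

theorem exists_isIntegralCurveOn_of_fences {t0 T y0 : ℝ} (hT : t0 ≤ T) {f : ℝ → ℝ → ℝ}
    (hf : ContinuousOn (uncurry f) (Icc t0 T ×ˢ univ)) {α β α' β' : ℝ → ℝ}
    (hαd : ∀ t ∈ Icc t0 T, HasDerivWithinAt α (α' t) (Icc t0 T) t) (hα0 : α t0 ≤ y0)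
    (hαf : ∀ t ∈ Icc t0 T, α' t < f t (α t))
    (hβd : ∀ t ∈ Icc t0 T, HasDerivWithinAt β (β' t) (Icc t0 T) t) (hβ0 : y0 ≤ β t0)
    (hβf : ∀ t ∈ Icc t0 T, f t (β t) < β' t) :
    ∃ φ : ℝ → ℝ, φ t0 = y0 ∧ IsIntegralCurveOn φ f (Icc t0 T) := by
  have ht0 : t0 ∈ Icc t0 T := left_mem_Icc.2 hT
  obtain ⟨Cα, hCα⟩ := isCompact_Icc.exists_bound_of_continuousOn (HasDerivWithinAt.continuousOn hαd)
  obtain ⟨Cβ, hCβ⟩ := isCompact_Icc.exists_bound_of_continuousOn (HasDerivWithinAt.continuousOn hβd)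
  set R := max Cα Cβ
  have hαR (t) (ht : t ∈ Icc t0 T) : α t ∈ Icc (-R) R :=
    abs_le.1 ((hCα t ht).trans (le_max_left _ _))
  have hβR (t) (ht : t ∈ Icc t0 T) : β t ∈ Icc (-R) R :=
    abs_le.1 ((hCβ t ht).trans (le_max_right _ _))
  obtain ⟨G, hGu, ⟨C, hGC⟩, hGf⟩ := exists_uniformContinuous_bounded_eqOn_Icc_prod hT
    ((hαR t0 ht0).1.trans (hαR t0 ht0).2) (hf.mono (prod_mono_right (subset_univ _)))
  have hαG (t) (ht : t ∈ Icc t0 T) : α' t < G (t, α t) := hGf (mk_mem_prod ht (hαR t ht)) ▸ hαf t ht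
  have hGβ (t) (ht : t ∈ Icc t0 T) : G (t, β t) < β' t := hGf (mk_mem_prod ht (hβR t ht)) ▸ hβf t ht
  obtain ⟨F, hFlip, hGF, hFanti, hFC, hFG⟩ :=
    exists_lipschitzWith_strictAnti_tendstoUniformly hGu hGC
  choose K hK using hFlip
  choose φ hφ0 hφ using fun n => exists_isIntegralCurveOn_Icc_of_lipschitzWith (F := curry (F n))
    (hK n) (fun t y => hFC n (t, y)) hT y0
  have hαφ (n) : ∀ t ∈ Icc t0 T, α t ≤ φ n t :=
    (hφ n).lowerFence_le hαd (hα0.trans_eq (hφ0 n).symm) fun t ht => (hαG t ht).trans (hGF n _)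
  have hanti (t) (ht : t ∈ Icc t0 T) : Antitone fun n => φ n t :=
    antitone_nat_of_succ_le fun n => image_le_of_deriv_lt_deriv_boundary_Icc (hφ (n + 1)) (hφ n)
      (by rw [hφ0, hφ0]) (fun s _ h => by rw [h]; exact hFanti n _) t ht
  set ψ : ℝ → ℝ := fun t => ⨅ n, φ n t
  have hψ : IsIntegralCurveOn ψ (curry G) (Icc t0 T) :=
    .of_tendstoUniformly (F := fun n => curry (F n)) hGu.continuous (fun n => (hK n).continuous)
      (fun n t y => hFC n (t, y)) hFG hφ fun t ht =>
        tendsto_atTop_ciInf (hanti t ht) ⟨α t, forall_mem_range.2 (hαφ · t ht)⟩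
  have hψ0 : ψ t0 = y0 := by simp [ψ, hφ0]
  have hαψ := hψ.lowerFence_le hαd (hα0.trans_eq hψ0.symm) hαG
  have hψβ := hψ.le_upperFence hβd (hψ0.trans_le hβ0) hGβ
  refine ⟨ψ, hψ0, fun t ht => ?_⟩
  have hGψ : G (t, ψ t) = f t (ψ t) :=
    hGf (mk_mem_prod ht ⟨(hαR t ht).1.trans (hαψ t ht), (hψβ t ht).trans (hβR t ht).2⟩)
  exact hGψ ▸ hψ t ht

theorem peano_strict_bounds_general (t0 y0 a : ℝ) (ha : 0 < a)
    (f : ℝ → ℝ → ℝ)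
    (hf : ContinuousOn (fun p : ℝ × ℝ => f p.1 p.2)
      (Icc t0 (t0 + a) ×ˢ (univ : Set ℝ)))
    (α β α' β' : ℝ → ℝ)
    (hαd : ∀ t ∈ Icc t0 (t0 + a), HasDerivWithinAt α (α' t) (Icc t0 (t0 + a)) t)
    (hα0 : α t0 ≤ y0)
    (hαf : ∀ t ∈ Icc t0 (t0 + a), α' t < f t (α t))
    (hβd : ∀ t ∈ Icc t0 (t0 + a), HasDerivWithinAt β (β' t) (Icc t0 (t0 + a)) t)
    (hβ0 : y0 ≤ β t0)
    (hβf : ∀ t ∈ Icc t0 (t0 + a), f t (β t) < β' t) :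
    (∃ φ : ℝ → ℝ, φ t0 = y0 ∧
      ∀ t ∈ Icc t0 (t0 + a),
        HasDerivWithinAt φ (f t (φ t)) (Icc t0 (t0 + a)) t) ∧
    (∀ ε : ℝ, 0 < ε → ε < a → ∀ φ : ℝ → ℝ, φ t0 = y0 →
      (∀ t ∈ Icc t0 (t0 + ε),
        HasDerivWithinAt φ (f t (φ t)) (Icc t0 (t0 + ε)) t) →
      ∃ ψ : ℝ → ℝ, ψ t0 = y0 ∧
        (∀ t ∈ Icc t0 (t0 + a),
          HasDerivWithinAt ψ (f t (ψ t)) (Icc t0 (t0 + a)) t) ∧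
        (∀ t ∈ Icc t0 (t0 + ε), ψ t = φ t)) ∧
    (∀ φ : ℝ → ℝ, φ t0 = y0 →
      (∀ t ∈ Icc t0 (t0 + a),
        HasDerivWithinAt φ (f t (φ t)) (Icc t0 (t0 + a)) t) →
      ∀ t ∈ Ioc t0 (t0 + a), α t < φ t ∧ φ t < β t) := by
  have restrict {s : Set ℝ} (hs : s ⊆ Icc t0 (t0 + a)) {u u' : ℝ → ℝ}
      (hu : ∀ t ∈ Icc t0 (t0 + a), HasDerivWithinAt u (u' t) (Icc t0 (t0 + a)) t) :
      ∀ t ∈ s, HasDerivWithinAt u (u' t) s t := fun t ht => (hu t (hs ht)).mono hs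
  refine ⟨exists_isIntegralCurveOn_of_fences (by linarith) hf hαd hα0 hαf hβd hβ0 hβf, ?_,
    fun φ hφ0 hφ t ht => ⟨IsIntegralCurveOn.lowerFence_lt hφ hαd (hα0.trans_eq hφ0.symm) hαf t ht,
      IsIntegralCurveOn.lt_upperFence hφ hβd (hφ0.trans_le hβ0) hβf t ht⟩⟩
  intro ε hε hεa φ hφ0 (hφ : IsIntegralCurveOn φ f (Icc t0 (t0 + ε)))
  have hsub₁ : Icc t0 (t0 + ε) ⊆ Icc t0 (t0 + a) := Icc_subset_Icc_right (by linarith)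
  have hsub₂ : Icc (t0 + ε) (t0 + a) ⊆ Icc t0 (t0 + a) := Icc_subset_Icc_left (by linarith)
  have hend : t0 + ε ∈ Ioc t0 (t0 + ε) := ⟨by linarith, le_rfl⟩
  have hαφ := hφ.lowerFence_lt (restrict hsub₁ hαd) (hα0.trans_eq hφ0.symm)
    (fun t ht => hαf t (hsub₁ ht)) _ hend
  have hφβ := hφ.lt_upperFence (restrict hsub₁ hβd) (hφ0.trans_le hβ0)
    (fun t ht => hβf t (hsub₁ ht)) _ hend
  obtain ⟨χ, hχ0, hχ⟩ := exists_isIntegralCurveOn_of_fences (by linarith)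
    (hf.mono (prod_mono_left hsub₂)) (restrict hsub₂ hαd) hαφ.le (fun t ht => hαf t (hsub₂ ht))
    (restrict hsub₂ hβd) hφβ.le (fun t ht => hβf t (hsub₂ ht))
  exact ⟨_, by simp [hφ0, hε.le], hφ.piecewise_Icc hχ hχ0 (by linarith) (by linarith),
    fun t ht => if_pos ht.2⟩

/-- Fourth version of Peano's Theorem, parts 1 and 2: if the problem
`y' = f(t,y)`, `y t0 = y0` on `I = [t0, t0+a]` has a strict lower solution `α`
and a strict upper solution `β`, then (1) it has a solution on `I`; (2) any
solution on a subinterval `[t0, t0+ε]` (`0 < ε < a`) extends to a solution on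
all of `I`, and every solution on `I` satisfies `α < φ < β` on `(t0, t0+a]`. -/
theorem peano_strict_bounds (t0 y0 a : ℝ) (ha : 0 < a)
    (f : ℝ → ℝ → ℝ)
    (hf : ContinuousOn (fun p : ℝ × ℝ => f p.1 p.2)
      (Icc t0 (t0 + a) ×ˢ (univ : Set ℝ)))
    (α β α' β' : ℝ → ℝ)
    (hαd : ∀ t ∈ Icc t0 (t0 + a), HasDerivWithinAt α (α' t) (Icc t0 (t0 + a)) t)
    (hαc : ContinuousOn α' (Icc t0 (t0 + a)))
    (hα0 : α t0 ≤ y0)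
    (hαf : ∀ t ∈ Icc t0 (t0 + a), α' t < f t (α t))
    (hβd : ∀ t ∈ Icc t0 (t0 + a), HasDerivWithinAt β (β' t) (Icc t0 (t0 + a)) t)
    (hβc : ContinuousOn β' (Icc t0 (t0 + a)))
    (hβ0 : y0 ≤ β t0)
    (hβf : ∀ t ∈ Icc t0 (t0 + a), f t (β t) < β' t) :
    (∃ φ : ℝ → ℝ, φ t0 = y0 ∧
      ∀ t ∈ Icc t0 (t0 + a),
        HasDerivWithinAt φ (f t (φ t)) (Icc t0 (t0 + a)) t) ∧
    (∀ ε : ℝ, 0 < ε → ε < a → ∀ φ : ℝ → ℝ, φ t0 = y0 →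
      (∀ t ∈ Icc t0 (t0 + ε),
        HasDerivWithinAt φ (f t (φ t)) (Icc t0 (t0 + ε)) t) →
      ∃ ψ : ℝ → ℝ, ψ t0 = y0 ∧
        (∀ t ∈ Icc t0 (t0 + a),
          HasDerivWithinAt ψ (f t (ψ t)) (Icc t0 (t0 + a)) t) ∧
        (∀ t ∈ Icc t0 (t0 + ε), ψ t = φ t)) ∧
    (∀ φ : ℝ → ℝ, φ t0 = y0 →
      (∀ t ∈ Icc t0 (t0 + a),
        HasDerivWithinAt φ (f t (φ t)) (Icc t0 (t0 + a)) t) →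
      ∀ t ∈ Ioc t0 (t0 + a), α t < φ t ∧ φ t < β t) :=
  peano_strict_bounds_general t0 y0 a ha f hf α β α' β' hαd hα0 hαf hβd hβ0 hβf
end
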